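/- arXiv:1308.3872 — 3 statements merged into one kernel-verified Lean document; each statement's English description precedes it below -/
import Mathlib

section
/- Λ is differentiable at every x with sin x ≠ 0, with derivative Λ'(x) = -ln|2 sin x|. -/
open Real MeasureTheory intervalIntegral

/-- The Lobachevsky function. -/
noncomputable def lob (x : ℝ) : ℝ := -∫ t in (0:ℝ)..x, Real.log |2 * Real.sin t|

theorem intervalIntegrable_log_abs_two_mul_sin (a b : ℝ) :
    IntervalIntegrable (fun t => log |2 * sin t|) volume a b :=
  MeromorphicOn.intervalIntegrable_log_norm
    (analyticOnNhd_const.mul analyticOnNhd_sin).meromorphicOn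

theorem lob_hasDerivAt :
    ∀ x : ℝ, Real.sin x ≠ 0 → HasDerivAt lob (-Real.log |2 * Real.sin x|) x := by
  intro x hx
  have hcont : ContinuousAt (fun t => log |2 * sin t|) x :=
    (continuous_const.mul continuous_sin).abs.continuousAt.log (by simpa using hx)
  have hmeas : Measurable fun t => log |2 * sin t| := by fun_prop
  exact (integral_hasDerivAt_right (intervalIntegrable_log_abs_two_mul_sin 0 x)
    hmeas.stronglyMeasurable.stronglyMeasurableAtFilter hcont).neg
end

section
/- For any real symmetric 2×2 matrix of the form [[−sin β/(sin(α+β) sin α), cos(α+β)/sin(α+β)], [cos(α+β)/sin(α+β), −sin α/(sin(α+β) sin β)]] with α > 0, β > 0, α + β < π, and any nonzero vector v = (x, y), we have vᵀ H v < 0. -/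
set_option maxHeartbeats 1000000


theorem hessian_form_neg (α β x y : ℝ) (hα : 0 < α) (hβ : 0 < β) (hs : α + β < Real.pi)
    (hv : (x, y) ≠ ((0 : ℝ), (0 : ℝ))) :
    x ^ 2 * (-Real.sin β / (Real.sin (α + β) * Real.sin α))
      + 2 * x * y * (Real.cos (α + β) / Real.sin (α + β))
      + y ^ 2 * (-Real.sin α / (Real.sin (α + β) * Real.sin β)) < 0 := by
  set a := Real.sin α with hadef
  set b := Real.sin β with hbdef
  set s := Real.sin (α + β) with hsdef
  set c := Real.cos (α + β) with hcdef
  have ha : 0 < a := Real.sin_pos_of_pos_of_lt_pi hα (by linarith)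
  have hb : 0 < b := Real.sin_pos_of_pos_of_lt_pi hβ (by linarith)
  have hss : 0 < s := Real.sin_pos_of_pos_of_lt_pi (by linarith) hs
  have hpy : s ^ 2 + c ^ 2 = 1 := Real.sin_sq_add_cos_sq (α + β)
  have hc1 : c < 1 := by nlinarith
  have hc2 : -1 < c := by nlinarith
  have hx2 : 0 < x ^ 2 * b ^ 2 + y ^ 2 * a ^ 2 := by
    have : x ≠ 0 ∨ y ≠ 0 := by
      by_contra h
      push_neg at h
      exact hv (by simp [h.1, h.2])
    rcases this with hx | hy
    · have : 0 < x ^ 2 * b ^ 2 := by positivity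
      nlinarith [sq_nonneg (y * a)]
    · have : 0 < y ^ 2 * a ^ 2 := by positivity
      nlinarith [sq_nonneg (x * b)]
  have hnum : -(x ^ 2 * b * b) + 2 * x * y * c * a * b - y ^ 2 * a * a < 0 := by
    rcases lt_or_ge 0 ((x * b - y * a) ^ 2) with h1 | h1
    · nlinarith [mul_pos (by linarith : (0:ℝ) < 1 + c) h1,
        mul_nonneg (by linarith : (0:ℝ) ≤ 1 - c) (sq_nonneg (x * b + y * a))]
    · have h2 : 0 < (x * b + y * a) ^ 2 := by nlinarith [sq_nonneg (x * b - y * a)]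
      nlinarith [mul_pos (by linarith : (0:ℝ) < 1 - c) h2,
        mul_nonneg (by linarith : (0:ℝ) ≤ 1 + c) (sq_nonneg (x * b - y * a))]
  have heq : x ^ 2 * (-b / (s * a)) + 2 * x * y * (c / s) + y ^ 2 * (-a / (s * b))
      = (-(x ^ 2 * b * b) + 2 * x * y * c * a * b - y ^ 2 * a * a) / (s * a * b) := by
    field_simp
    ring
  rw [heq]
  exact div_neg_of_neg_of_pos hnum (by positivity)
end

section
/- The function E(α, β) = Λ(α) + Λ(β) + Λ(π − α − β) is strictly concave on the open convex domain D = {(α, β) : α > 0, β > 0, α + β < π}. -/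
open Real MeasureTheory intervalIntegral Matrix

/-- The hyperbolic volume energy of a Euclidean triangle with angles a, b, π - a - b. -/
noncomputable def Etri (a b : ℝ) : ℝ := lob a + lob b + lob (Real.pi - a - b)

/-!
Strict concavity on a convex set reduces to strict concavity along lines. Along a line through
two points of the domain, the angles `α`, `β`, `γ = π - α - β` move affinely with velocities
`u`, `v`, `w` summing to `0`, and since `Λ'' = -cot`, the second derivative of `E` is
`-(u² cot α + v² cot β + w² cot γ)`. In a triangle `cot α cot β + cot β cot γ + cot γ cot α = 1`
and `cot α + cot γ = sin β / (sin α sin γ) > 0`, which make this quadratic form positive definite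
on the plane `u + v + w = 0`.
-/

open AffineMap Filter Topology

theorem strictConcaveOn_of_forall_lineMap {𝕜 E β : Type*} [Field 𝕜] [LinearOrder 𝕜]
    [IsStrictOrderedRing 𝕜] [AddCommGroup E] [Module 𝕜 E] [AddCommMonoid β] [PartialOrder β]
    [SMul 𝕜 β] {s : Set E} {f : E → β} (hs : Convex 𝕜 s)
    (h : ∀ x ∈ s, ∀ y ∈ s, x ≠ y →
      StrictConcaveOn 𝕜 ((lineMap x y : 𝕜 → E) ⁻¹' s) (f ∘ lineMap x y)) :
    StrictConcaveOn 𝕜 s f := by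
  refine ⟨hs, fun x hx y hy hxy a b ha hb hab => ?_⟩
  have := (h x hx y hy hxy).2 (x := 0) (y := 1) (by simpa) (by simpa) zero_ne_one ha hb hab
  obtain rfl : a = 1 - b := eq_sub_of_add_eq hab
  simpa [lineMap_apply_module] using this

theorem strictConcaveOn_of_hasDerivAt2_neg {D : Set ℝ} (hD : Convex ℝ D) (hDo : IsOpen D)
    {f f' f'' : ℝ → ℝ} (hf : ∀ x ∈ D, HasDerivAt f (f' x) x)
    (hf' : ∀ x ∈ D, HasDerivAt f' (f'' x) x) (hf'' : ∀ x ∈ D, f'' x < 0) :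
    StrictConcaveOn ℝ D f := by
  refine strictConcaveOn_of_deriv2_neg' hD (fun x hx => (hf x hx).continuousAt.continuousWithinAt)
    fun x hx => ?_
  have hderiv : deriv f =ᶠ[𝓝 x] f' :=
    eventually_of_mem (hDo.mem_nhds hx) fun y hy => (hf y hy).deriv
  rw [Function.iterate_succ_apply, Function.iterate_one, hderiv.deriv_eq, (hf' x hx).deriv]
  exact hf'' x hx

theorem quadratic_pos_of_add_eq_zero {x y z u v w : ℝ} (hxz : 0 < x + z)
    (hdet : 0 < x * y + y * z + z * x) (huvw : u + v + w = 0) (huv : u ≠ 0 ∨ v ≠ 0) :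
    0 < x * u ^ 2 + y * v ^ 2 + z * w ^ 2 := by
  obtain rfl : w = -(u + v) := by linear_combination huvw
  have key : (x + z) * (x * u ^ 2 + y * v ^ 2 + z * (-(u + v)) ^ 2)
      = ((x + z) * u + z * v) ^ 2 + (x * y + y * z + z * x) * v ^ 2 := by ring
  refine pos_of_mul_pos_right ?_ hxz.le
  rw [key]
  rcases eq_or_ne v 0 with rfl | hv
  · have hu : u ≠ 0 := huv.resolve_right (not_not.2 rfl)
    simpa using sq_pos_of_ne_zero (mul_ne_zero hxz.ne' hu)
  · positivity

theorem cot_add_cot {x y : ℝ} (hx : sin x ≠ 0) (hy : sin y ≠ 0) :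
    cot x + cot y = sin (x + y) / (sin x * sin y) := by
  rw [cot_eq_cos_div_sin, cot_eq_cos_div_sin, sin_add]
  field_simp
  ring

theorem cot_mul_cot_add_cot_mul_cot_add_cot_mul_cot {A B C : ℝ} (h : A + B + C = π)
    (hA : sin A ≠ 0) (hB : sin B ≠ 0) (hC : sin C ≠ 0) :
    cot A * cot B + cot B * cot C + cot C * cot A = 1 := by
  obtain rfl : C = π - (A + B) := by linear_combination h
  rw [sin_pi_sub] at hC
  simp only [cot_eq_cos_div_sin, sin_pi_sub, cos_pi_sub, sin_add, cos_add] at hC ⊢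
  field_simp
  ring

theorem cot_mul_sq_add_cot_mul_sq_add_cot_mul_sq_pos {A B C u v w : ℝ} (hA : 0 < A) (hB : 0 < B)
    (hC : 0 < C) (h : A + B + C = π) (huvw : u + v + w = 0) (huv : u ≠ 0 ∨ v ≠ 0) :
    0 < cot A * u ^ 2 + cot B * v ^ 2 + cot C * w ^ 2 := by
  have hsA : 0 < sin A := sin_pos_of_pos_of_lt_pi hA (by linarith)
  have hsB : 0 < sin B := sin_pos_of_pos_of_lt_pi hB (by linarith)
  have hsC : 0 < sin C := sin_pos_of_pos_of_lt_pi hC (by linarith)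
  refine quadratic_pos_of_add_eq_zero ?_ ?_ huvw huv
  · rw [cot_add_cot hsA.ne' hsC.ne', show A + C = π - B by linarith, sin_pi_sub]
    positivity
  · rw [cot_mul_cot_add_cot_mul_cot_add_cot_mul_cot h hsA.ne' hsB.ne' hsC.ne']
    exact one_pos

theorem lob_eq_neg_integral_log_two_mul_sin :
    lob = fun x => -∫ t in (0:ℝ)..x, log (2 * sin t) := by
  funext x
  simp only [lob, log_abs]

theorem intervalIntegrable_log_two_mul_sin (a b : ℝ) :
    IntervalIntegrable (fun t => log (2 * sin t)) volume a b :=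
  (analyticOnNhd_const.mul analyticOnNhd_sin).meromorphicOn.intervalIntegrable_log

theorem hasDerivAt_lob {x : ℝ} (hx : sin x ≠ 0) : HasDerivAt lob (-log (2 * sin x)) x := by
  have hcont : ContinuousAt (fun t => log (2 * sin t)) x :=
    (continuous_const.mul continuous_sin).continuousAt.log (mul_ne_zero two_ne_zero hx)
  have hmeas : Measurable fun t => log (2 * sin t) := by fun_prop
  rw [lob_eq_neg_integral_log_two_mul_sin]
  exact (integral_hasDerivAt_right (intervalIntegrable_log_two_mul_sin 0 x)
    hmeas.stronglyMeasurable.stronglyMeasurableAtFilter hcont).neg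

theorem hasDerivAt_neg_log_two_mul_sin {x : ℝ} (hx : sin x ≠ 0) :
    HasDerivAt (fun y => -log (2 * sin y)) (-cot x) x := by
  refine (((hasDerivAt_sin x).const_mul 2).log (mul_ne_zero two_ne_zero hx)).neg.congr_deriv ?_
  rw [cot_eq_cos_div_sin]
  field_simp

theorem hasDerivAt_lob_lineMap {a b t : ℝ} (h : sin (lineMap a b t) ≠ 0) :
    HasDerivAt (fun s => lob (lineMap a b s)) (-log (2 * sin (lineMap a b t)) * (b - a)) t :=
  (hasDerivAt_lob h).comp t hasDerivAt_lineMap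

theorem hasDerivAt_neg_log_two_mul_sin_lineMap {a b t : ℝ} (h : sin (lineMap a b t) ≠ 0) :
    HasDerivAt (fun s => -log (2 * sin (lineMap a b s)) * (b - a))
      (-(cot (lineMap a b t) * (b - a) ^ 2)) t :=
  (((hasDerivAt_neg_log_two_mul_sin h).comp t hasDerivAt_lineMap).mul_const _).congr_deriv
    (by ring)

def triangleDomain : Set (ℝ × ℝ) := {p | 0 < p.1 ∧ 0 < p.2 ∧ p.1 + p.2 < π}

theorem convex_triangleDomain : Convex ℝ triangleDomain :=
  (convex_halfSpace_gt (LinearMap.fst ℝ ℝ ℝ).isLinear 0).inter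
    ((convex_halfSpace_gt (LinearMap.snd ℝ ℝ ℝ).isLinear 0).inter
      (convex_halfSpace_lt (LinearMap.fst ℝ ℝ ℝ + LinearMap.snd ℝ ℝ ℝ).isLinear π))

theorem isOpen_triangleDomain : IsOpen triangleDomain :=
  (isOpen_lt continuous_const continuous_fst).inter
    ((isOpen_lt continuous_const continuous_snd).inter
      (isOpen_lt (continuous_fst.add continuous_snd) continuous_const))

theorem Etri_comp_lineMap (p q : ℝ × ℝ) :
    (fun p : ℝ × ℝ => Etri p.1 p.2) ∘ (lineMap p q : ℝ → ℝ × ℝ) = fun t =>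
      lob (lineMap p.1 q.1 t) + lob (lineMap p.2 q.2 t)
        + lob (lineMap (π - p.1 - p.2) (π - q.1 - q.2) t) := by
  funext t
  simp only [Function.comp_apply, Etri, lineMap_apply_module', Prod.fst_add, Prod.snd_add,
    Prod.smul_fst, Prod.smul_snd, Prod.fst_sub, Prod.snd_sub, smul_eq_mul]
  ring_nf

theorem lineMap_pos_of_lineMap_mem_triangleDomain {p q : ℝ × ℝ} {t : ℝ}
    (ht : lineMap p q t ∈ triangleDomain) : 0 < lineMap p.1 q.1 t ∧ 0 < lineMap p.2 q.2 t ∧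
      0 < lineMap (π - p.1 - p.2) (π - q.1 - q.2) t := by
  obtain ⟨h1, h2, h3⟩ := ht
  simp only [lineMap_apply_module', Prod.fst_add, Prod.snd_add, Prod.smul_fst, Prod.smul_snd,
    Prod.fst_sub, Prod.snd_sub, smul_eq_mul] at h1 h2 h3 ⊢
  exact ⟨h1, h2, by linarith⟩

theorem strictConcaveOn_Etri_lineMap {p q : ℝ × ℝ} (hpq : p ≠ q) :
    StrictConcaveOn ℝ ((lineMap p q : ℝ → ℝ × ℝ) ⁻¹' triangleDomain)
      ((fun p : ℝ × ℝ => Etri p.1 p.2) ∘ lineMap p q) := by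
  set α : ℝ → ℝ := ⇑(lineMap (k := ℝ) p.1 q.1)
  set β : ℝ → ℝ := ⇑(lineMap (k := ℝ) p.2 q.2)
  set γ : ℝ → ℝ := ⇑(lineMap (k := ℝ) (π - p.1 - p.2) (π - q.1 - q.2))
  have hsum : ∀ t, α t + β t + γ t = π := fun t => by
    simp only [α, β, γ, lineMap_apply_ring']
    ring
  have hsin : ∀ t ∈ (lineMap p q : ℝ → ℝ × ℝ) ⁻¹' triangleDomain,
      sin (α t) ≠ 0 ∧ sin (β t) ≠ 0 ∧ sin (γ t) ≠ 0 := by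
    intro t ht
    obtain ⟨hα, hβ, hγ⟩ := lineMap_pos_of_lineMap_mem_triangleDomain ht
    have := hsum t
    exact ⟨(sin_pos_of_pos_of_lt_pi hα (by linarith)).ne',
      (sin_pos_of_pos_of_lt_pi hβ (by linarith)).ne',
      (sin_pos_of_pos_of_lt_pi hγ (by linarith)).ne'⟩
  have huv : q.1 - p.1 ≠ 0 ∨ q.2 - p.2 ≠ 0 := by
    by_contra! h
    exact hpq (Prod.ext (sub_eq_zero.1 h.1).symm (sub_eq_zero.1 h.2).symm)
  rw [Etri_comp_lineMap]
  refine strictConcaveOn_of_hasDerivAt2_neg (convex_triangleDomain.affine_preimage _)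
    (isOpen_triangleDomain.preimage lineMap_continuous)
    (f' := fun t => -log (2 * sin (α t)) * (q.1 - p.1) + -log (2 * sin (β t)) * (q.2 - p.2)
      + -log (2 * sin (γ t)) * ((π - q.1 - q.2) - (π - p.1 - p.2)))
    (f'' := fun t => -(cot (α t) * (q.1 - p.1) ^ 2) + -(cot (β t) * (q.2 - p.2) ^ 2)
      + -(cot (γ t) * ((π - q.1 - q.2) - (π - p.1 - p.2)) ^ 2)) ?_ ?_ ?_
  · intro t ht
    obtain ⟨hα, hβ, hγ⟩ := hsin t ht
    exact ((hasDerivAt_lob_lineMap hα).add (hasDerivAt_lob_lineMap hβ)).add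
      (hasDerivAt_lob_lineMap hγ)
  · intro t ht
    obtain ⟨hα, hβ, hγ⟩ := hsin t ht
    exact ((hasDerivAt_neg_log_two_mul_sin_lineMap hα).add
      (hasDerivAt_neg_log_two_mul_sin_lineMap hβ)).add (hasDerivAt_neg_log_two_mul_sin_lineMap hγ)
  · intro t ht
    obtain ⟨hα, hβ, hγ⟩ := lineMap_pos_of_lineMap_mem_triangleDomain ht
    have := cot_mul_sq_add_cot_mul_sq_add_cot_mul_sq_pos hα hβ hγ (hsum t)
      (w := (π - q.1 - q.2) - (π - p.1 - p.2)) (by ring) huv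
    linarith

theorem Etri_strictConcave :
    StrictConcaveOn ℝ {p : ℝ × ℝ | 0 < p.1 ∧ 0 < p.2 ∧ p.1 + p.2 < Real.pi}
      (fun p => Etri p.1 p.2) :=
  strictConcaveOn_of_forall_lineMap convex_triangleDomain fun _ _ _ _ hpq =>
    strictConcaveOn_Etri_lineMap hpq
end
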